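/- arXiv:1507.01037 — 4 statements merged into one kernel-verified Lean document; each statement's English description precedes it below -/
import Mathlib

section
/- Let ε be a real random variable with E[ε] = 0 and E[ε²] ≤ M, and let ψ : ℝ → ℝ satisfy ψ(x) ≤ log(1 + x + x²) for all x. Then for every t > 0, P(ψ(tε/2) ≥ Mt²) ≤ (1 + Mt²/4) exp(−Mt²) ≤ exp(−Mt²/2). -/
/-!
Exponentiating `ψ(x) ≤ log (1 + x + x²)` puts the event `Mt² ≤ ψ(tε/2)` inside the event
`exp (Mt²) ≤ 1 + tε/2 + (tε/2)²`, and Markov's inequality bounds the latter by the mean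
`1 + t² E[ε²]/4 ≤ 1 + Mt²/4` of the quadratic, divided by `exp (Mt²)`.
-/

open MeasureTheory Real

lemma one_add_add_sq_pos (x : ℝ) : 0 < 1 + x + x ^ 2 := by
  nlinarith [sq_nonneg (x + 1 / 2)]

lemma one_add_div_four_mul_exp_neg_le {c : ℝ} (hc : 0 ≤ c) :
    (1 + c / 4) * exp (-c) ≤ exp (-c / 2) := by
  have h : 1 + c / 4 ≤ exp (c / 2) := by linarith [add_one_le_exp (c / 2)]
  calc (1 + c / 4) * exp (-c) ≤ exp (c / 2) * exp (-c) := by gcongr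
    _ = exp (-c / 2) := by rw [← exp_add]; ring_nf

section Moments

variable {Ω : Type*} [MeasurableSpace Ω] {μ : Measure Ω} {X : Ω → ℝ}

lemma integrable_mul_sq (hX2 : Integrable (fun ω => X ω ^ 2) μ) (a : ℝ) :
    Integrable (fun ω => (a * X ω) ^ 2) μ := by
  simpa only [mul_pow] using hX2.const_mul (a ^ 2)

lemma integral_one_add_mul_add_sq [IsProbabilityMeasure μ] (hX : Integrable X μ)
    (hX2 : Integrable (fun ω => X ω ^ 2) μ) (hmean : ∫ ω, X ω ∂μ = 0) (a : ℝ) :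
    ∫ ω, (1 + a * X ω + (a * X ω) ^ 2) ∂μ = 1 + a ^ 2 * ∫ ω, X ω ^ 2 ∂μ := by
  have hlin : Integrable (fun ω => 1 + a * X ω) μ := (integrable_const 1).add (hX.const_mul a)
  rw [integral_add hlin (integrable_mul_sq hX2 a),
    integral_add (integrable_const 1) (hX.const_mul a), integral_const_mul, hmean]
  simp_rw [mul_pow]
  rw [integral_const_mul]
  simp

lemma measureReal_exp_le_one_add_mul_add_sq_le [IsProbabilityMeasure μ] (hX : Integrable X μ)
    (hX2 : Integrable (fun ω => X ω ^ 2) μ) (hmean : ∫ ω, X ω ∂μ = 0) (a c : ℝ) :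
    μ.real {ω | exp c ≤ 1 + a * X ω + (a * X ω) ^ 2}
      ≤ (1 + a ^ 2 * ∫ ω, X ω ^ 2 ∂μ) * exp (-c) := by
  have hmarkov := mul_meas_ge_le_integral_of_nonneg
    (Filter.Eventually.of_forall fun ω => (one_add_add_sq_pos (a * X ω)).le)
    (((integrable_const 1).add (hX.const_mul a)).add (integrable_mul_sq hX2 a)) (exp c)
  rw [integral_one_add_mul_add_sq hX hX2 hmean, ← le_div_iff₀' (exp_pos c)] at hmarkov
  rwa [exp_neg, ← div_eq_mul_inv]

end Moments

theorem truncated_score_tail_general {Ω : Type*} [MeasurableSpace Ω]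
    (μ : Measure Ω) [IsProbabilityMeasure μ]
    (ε : Ω → ℝ)
    (hint : Integrable ε μ) (hint2 : Integrable (fun ω => (ε ω)^2) μ)
    (ψ : ℝ → ℝ)
    (hψ : ∀ x : ℝ, ψ x ≤ Real.log (1 + x + x^2))
    (M : ℝ) (hmean : ∫ ω, ε ω ∂μ = 0) (hvar : ∫ ω, (ε ω)^2 ∂μ ≤ M)
    (t : ℝ) :
    (μ {ω | M * t^2 ≤ ψ (t * ε ω / 2)}).toReal
        ≤ (1 + M * t^2 / 4) * Real.exp (-(M * t^2)) ∧
    (1 + M * t^2 / 4) * Real.exp (-(M * t^2)) ≤ Real.exp (-(M * t^2) / 2) := by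
  have hM : 0 ≤ M := (integral_nonneg fun ω => sq_nonneg _).trans hvar
  have hsub : {ω | M * t ^ 2 ≤ ψ (t * ε ω / 2)}
      ⊆ {ω | exp (M * t ^ 2) ≤ 1 + t / 2 * ε ω + (t / 2 * ε ω) ^ 2} := fun ω hω => by
    rw [Set.mem_ofPred_eq, div_mul_eq_mul_div, ← le_log_iff_exp_le (one_add_add_sq_pos _)]
    exact hω.trans (hψ _)
  refine ⟨?_, one_add_div_four_mul_exp_neg_le (by positivity)⟩
  calc μ.real {ω | M * t ^ 2 ≤ ψ (t * ε ω / 2)}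
      ≤ μ.real {ω | exp (M * t ^ 2) ≤ 1 + t / 2 * ε ω + (t / 2 * ε ω) ^ 2} :=
        measureReal_mono hsub
    _ ≤ (1 + (t / 2) ^ 2 * ∫ ω, ε ω ^ 2 ∂μ) * exp (-(M * t ^ 2)) :=
        measureReal_exp_le_one_add_mul_add_sq_le hint hint2 hmean _ _
    _ ≤ (1 + (t / 2) ^ 2 * M) * exp (-(M * t ^ 2)) := by gcongr
    _ = (1 + M * t ^ 2 / 4) * exp (-(M * t ^ 2)) := by ring

/-- Sub-Gaussian-type tail of the truncated score under a second-moment bound: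
    P(ψ(tε/2) ≥ Mt²) ≤ (1+Mt²/4)·exp(−Mt²) ≤ exp(−Mt²/2). -/
theorem truncated_score_tail {Ω : Type*} [MeasurableSpace Ω]
    (μ : Measure Ω) [IsProbabilityMeasure μ]
    (ε : Ω → ℝ) (hmeas : Measurable ε)
    (hint : Integrable ε μ) (hint2 : Integrable (fun ω => (ε ω)^2) μ)
    (ψ : ℝ → ℝ) (hψmeas : Measurable ψ)
    (hψ : ∀ x : ℝ, ψ x ≤ Real.log (1 + x + x^2))
    (M : ℝ) (hmean : ∫ ω, ε ω ∂μ = 0) (hvar : ∫ ω, (ε ω)^2 ∂μ ≤ M)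
    (t : ℝ) (ht : 0 < t) :
    (μ {ω | M * t^2 ≤ ψ (t * ε ω / 2)}).toReal
        ≤ (1 + M * t^2 / 4) * Real.exp (-(M * t^2)) ∧
    (1 + M * t^2 / 4) * Real.exp (-(M * t^2)) ≤ Real.exp (-(M * t^2) / 2) :=
  truncated_score_tail_general μ ε hint hint2 ψ hψ M hmean hvar t
end

section
/- Under the hypotheses of the three-point inequality F(β) − F(β^{(k)}) ≥ (φ/2)‖β^{(k)} − β^{(k-1)}‖² − φ⟨β − β^{(k-1)}, β^{(k)} − β^{(k-1)}⟩ (valid for every β and every k ≥ 1), where β̂ is a minimizer of F, one has for every k ≥ 1: F(β^{(k)}) − F(β̂) ≤ (φ/(2k))‖β^{(0)} − β̂‖₂². -/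
open scoped RealInnerProductSpace

/-- Lemma 5.3: O(1/k) sublinear rate from the three-point inequality. -/
theorem sublinear_rate {d : ℕ} (F : EuclideanSpace ℝ (Fin d) → ℝ)
    (φ : ℝ) (hφ : 0 < φ)
    (βs : ℕ → EuclideanSpace ℝ (Fin d))
    (βhat : EuclideanSpace ℝ (Fin d))
    (hmin : ∀ β, F βhat ≤ F β)
    (h3pt : ∀ (β : EuclideanSpace ℝ (Fin d)) (k : ℕ), 1 ≤ k →
      F β - F (βs k) ≥ φ / 2 * ‖βs k - βs (k - 1)‖^2
        - φ * ⟪β - βs (k - 1), βs k - βs (k - 1)⟫) :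
    ∀ k : ℕ, 1 ≤ k → F (βs k) - F βhat ≤ φ / (2 * k) * ‖βs 0 - βhat‖^2 := by
  intro k hk
  set a : ℕ → ℝ := fun j => φ / 2 * ‖βs j - βhat‖ ^ 2 with ha
  -- key per-step inequality
  have key : ∀ j : ℕ, 1 ≤ j → F (βs j) - F βhat ≤ a (j - 1) - a j := by
    intro j hj
    have h := h3pt βhat j hj
    have expand : ‖βs j - βhat‖ ^ 2
        = ‖βs j - βs (j - 1)‖ ^ 2
          - 2 * ⟪βs j - βs (j - 1), βhat - βs (j - 1)⟫
          + ‖βhat - βs (j - 1)‖ ^ 2 := by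
      have hrw : βs j - βhat = (βs j - βs (j - 1)) - (βhat - βs (j - 1)) := by abel
      rw [hrw, norm_sub_sq_real]
    have hsym : ⟪βs j - βs (j - 1), βhat - βs (j - 1)⟫
        = ⟪βhat - βs (j - 1), βs j - βs (j - 1)⟫ := real_inner_comm _ _
    have hnorm : ‖βhat - βs (j - 1)‖ = ‖βs (j - 1) - βhat‖ := norm_sub_rev _ _
    have hsq : ‖βhat - βs (j - 1)‖ ^ 2 = ‖βs (j - 1) - βhat‖ ^ 2 := by rw [hnorm]
    have heq : φ / 2 * ‖βs j - βhat‖ ^ 2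
        = φ / 2 * ‖βs j - βs (j - 1)‖ ^ 2
          - φ * ⟪βhat - βs (j - 1), βs j - βs (j - 1)⟫
          + φ / 2 * ‖βs (j - 1) - βhat‖ ^ 2 := by
      rw [expand, hsym, hsq]; ring
    simp only [ha]
    linarith [h, heq]
  -- monotonicity of F (βs n)
  have mono : ∀ n : ℕ, F (βs (n + 1)) ≤ F (βs n) := by
    intro n
    have h := h3pt (βs ((n + 1) - 1)) (n + 1) (by omega)
    simp only [Nat.add_sub_cancel, sub_self, inner_zero_left, mul_zero, sub_zero] at h
    have hx : 0 ≤ φ / 2 * ‖βs (n + 1) - βs n‖ ^ 2 :=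
      mul_nonneg (by linarith) (sq_nonneg _)
    linarith
  have hanti : Antitone (fun n => F (βs n)) := antitone_nat_of_succ_le mono
  have sum_le : ∑ i ∈ Finset.range k, (F (βs (i + 1)) - F βhat) ≤ a 0 - a k := by
    rw [← Finset.sum_range_sub' a k]
    apply Finset.sum_le_sum
    intro i _
    have h := key (i + 1) (by omega)
    simpa using h
  have hkpos : (0 : ℝ) < (k : ℝ) := by exact_mod_cast hk
  have hk2 : (k : ℝ) * (F (βs k) - F βhat)
      ≤ ∑ i ∈ Finset.range k, (F (βs (i + 1)) - F βhat) := by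
    calc (k : ℝ) * (F (βs k) - F βhat)
        = ∑ _i ∈ Finset.range k, (F (βs k) - F βhat) := by
          rw [Finset.sum_const, Finset.card_range, nsmul_eq_mul]
      _ ≤ _ := by
          apply Finset.sum_le_sum
          intro i hi
          have hik : i + 1 ≤ k := Finset.mem_range.mp hi
          have := hanti hik
          simp only at this
          linarith
  have hak : 0 ≤ a k := mul_nonneg (by linarith) (sq_nonneg _)
  have hfin : F (βs k) - F βhat ≤ a 0 / k := by
    rw [le_div_iff₀ hkpos]
    calc (F (βs k) - F βhat) * k = k * (F (βs k) - F βhat) := by ring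
      _ ≤ a 0 - a k := le_trans hk2 sum_le
      _ ≤ a 0 := by linarith
  calc F (βs k) - F βhat ≤ a 0 / k := hfin
    _ = φ / (2 * k) * ‖βs 0 - βhat‖ ^ 2 := by
        simp only [ha]
        field_simp
end

section
/- Let L : ℝ^d → ℝ be convex and differentiable, λ ∈ ℝ^d with nonnegative entries, β*, β̃ ∈ ℝ^d, and E an index set containing the support of β*. Suppose there exists ξ in the subdifferential of ‖·‖₁ at β̃ such that ‖∇L(β̃) + λ ⊙ ξ‖_∞ ≤ ε, and that min_{j∈E^c} λ_j > ‖∇L(β*)‖_∞ + ε. Then ‖(β̃ − β*)_{E^c}‖₁ ≤ [(max_j λ_j + ‖∇L(β*)‖_∞ + ε) / (min_{j∈E^c} λ_j − ‖∇L(β*)‖_∞ − ε)] · ‖(β̃ − β*)_{E}‖₁. -/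
/-!
Write `δ = β̃ - β*`. Convexity makes the gradient monotone, `⟨∇L(β*), δ⟩ ≤ ⟨∇L(β̃), δ⟩`, so
`⟨λ ⊙ ξ, δ⟩ = ⟨∇L(β̃) + λ ⊙ ξ, δ⟩ - ⟨∇L(β̃), δ⟩ ≤ (ε + ‖∇L(β*)‖_∞) ‖δ‖₁` by Hölder.
Off `E` we have `β*_j = 0` and `ξ_j = sign β̃_j`, so `λ_j ξ_j δ_j = λ_j |δ_j|` is at least
`(min_{Eᶜ} λ) |δ_j|`, while on `E` the term is at least `-(max λ) |δ_j|`.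
Splitting `‖δ‖₁` over `E` and `Eᶜ` and comparing gives the cone inequality.
-/

open Finset

section Convex

variable {E : Type*} [NormedAddCommGroup E] [NormedSpace ℝ E] {f : E → ℝ} {x : E}

theorem ConvexOn.fderiv_apply_sub_le (hf : ConvexOn ℝ Set.univ f) (hx : DifferentiableAt ℝ f x)
    (y : E) : fderiv ℝ f x (y - x) ≤ f y - f x := by
  have hline : HasDerivAt (fun t : ℝ => t • (y - x) + x) (y - x) 0 := by
    simpa using ((hasDerivAt_id (0 : ℝ)).smul_const (y - x)).add_const x
  have hderiv : HasDerivAt (fun t : ℝ => f (t • (y - x) + x)) (fderiv ℝ f x (y - x)) 0 :=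
    hx.hasFDerivAt.comp_hasDerivAt_of_eq 0 hline (by simp)
  have hconv : ConvexOn ℝ Set.univ (fun t : ℝ => f (t • (y - x) + x)) := by
    simpa [Function.comp_def, AffineMap.lineMap_apply] using
      hf.comp_affineMap (AffineMap.lineMap x y : ℝ →ᵃ[ℝ] E)
  simpa [slope] using
    hconv.le_slope_of_hasDerivAt (Set.mem_univ 0) (Set.mem_univ 1) one_pos hderiv

theorem ConvexOn.fderiv_apply_sub_le_fderiv_apply_sub {y : E} (hf : ConvexOn ℝ Set.univ f)
    (hx : DifferentiableAt ℝ f x) (hy : DifferentiableAt ℝ f y) :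
    fderiv ℝ f x (y - x) ≤ fderiv ℝ f y (y - x) := by
  have hxy := hf.fderiv_apply_sub_le hx y
  have hyx := hf.fderiv_apply_sub_le hy x
  rw [← neg_sub y x, map_neg] at hyx
  linarith

end Convex

theorem LinearMap.apply_eq_sum_smul_apply_single {ι R M : Type*} [Fintype ι] [DecidableEq ι]
    [CommSemiring R] [AddCommMonoid M] [Module R M] (f : (ι → R) →ₗ[R] M) (x : ι → R) :
    f x = ∑ i, x i • f (Pi.single i 1) := by
  conv_lhs => rw [pi_eq_sum_univ' x, map_sum]
  simp only [map_smul]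

section Coordinates

variable {ι : Type*} [Fintype ι]

theorem ConvexOn.sum_mul_fderiv_single_le [DecidableEq ι] {f : (ι → ℝ) → ℝ} {x y : ι → ℝ}
    (hf : ConvexOn ℝ Set.univ f) (hx : DifferentiableAt ℝ f x) (hy : DifferentiableAt ℝ f y) :
    ∑ j, (y j - x j) * fderiv ℝ f x (Pi.single j 1)
      ≤ ∑ j, (y j - x j) * fderiv ℝ f y (Pi.single j 1) := by
  have h := hf.fderiv_apply_sub_le_fderiv_apply_sub hx hy
  rwa [← ContinuousLinearMap.coe_coe, ← ContinuousLinearMap.coe_coe (fderiv ℝ f y),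
    LinearMap.apply_eq_sum_smul_apply_single, LinearMap.apply_eq_sum_smul_apply_single] at h

/-- Hölder's inequality `⟨a, b⟩ ≤ ‖a‖₁ ‖b‖_∞`, applied to `gtil + p` and to `gstar`, after
monotonicity replaces `gtil` by `gstar`. -/
theorem sum_mul_le_of_approx_stationary (δ gstar gtil p : ι → ℝ) {ε G : ℝ}
    (hmono : ∑ j, δ j * gstar j ≤ ∑ j, δ j * gtil j) (hstat : ∀ j, |gtil j + p j| ≤ ε)
    (hG : ∀ j, |gstar j| ≤ G) :
    ∑ j, p j * δ j ≤ (G + ε) * ∑ j, |δ j| := by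
  have hterm : ∀ j, δ j * (gtil j + p j) - δ j * gstar j ≤ |δ j| * ε + |δ j| * G := fun j =>
    add_le_add ((le_abs_self _).trans (by rw [abs_mul]; gcongr; exact hstat j))
      ((neg_le_abs _).trans (by rw [abs_mul]; gcongr; exact hG j))
  calc ∑ j, p j * δ j = ∑ j, δ j * (gtil j + p j) - ∑ j, δ j * gtil j := by
        rw [← sum_sub_distrib]; exact sum_congr rfl fun j _ => by ring
    _ ≤ ∑ j, (δ j * (gtil j + p j) - δ j * gstar j) := by rw [sum_sub_distrib]; linarith
    _ ≤ ∑ j, (|δ j| * ε + |δ j| * G) := sum_le_sum fun j _ => hterm j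
    _ = (G + ε) * ∑ j, |δ j| := by rw [mul_sum]; exact sum_congr rfl fun j _ => by ring

theorem sum_compl_abs_le_div_mul_sum_abs [DecidableEq ι] (s : Finset ι) (δ p : ι → ℝ)
    {lmin lmax c : ℝ} (hc : c < lmin) (htotal : ∑ j, p j * δ j ≤ c * ∑ j, |δ j|)
    (hoff : ∀ j ∉ s, lmin * |δ j| ≤ p j * δ j) (hon : ∀ j ∈ s, -(lmax * |δ j|) ≤ p j * δ j) :
    ∑ j ∈ sᶜ, |δ j| ≤ (lmax + c) / (lmin - c) * ∑ j ∈ s, |δ j| := by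
  have hin := sum_le_sum hon
  have hout := sum_le_sum fun j hj => hoff j (mem_compl.1 hj)
  rw [sum_neg_distrib, ← mul_sum] at hin
  rw [← mul_sum] at hout
  rw [← sum_add_sum_compl s, ← sum_add_sum_compl s (fun j => |δ j|)] at htotal
  rw [div_mul_eq_mul_div, le_div_iff₀ (sub_pos.2 hc)]
  linarith

end Coordinates

theorem Real.sign_mul_self (a : ℝ) : Real.sign a * a = |a| := by
  rcases lt_trichotomy a 0 with h | rfl | h
  · rw [Real.sign_of_neg h, abs_of_neg h, neg_one_mul]
  · simp
  · rw [Real.sign_of_pos h, abs_of_pos h, one_mul]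

theorem mul_abs_le_mul_mul_of_eq_sign {a x l m : ℝ} (hm : m ≤ l)
    (hx : a ≠ 0 → x = Real.sign a) : m * |a| ≤ l * x * a := by
  rcases eq_or_ne a 0 with rfl | ha
  · simp
  · rw [hx ha, mul_assoc, Real.sign_mul_self]
    exact mul_le_mul_of_nonneg_right hm (abs_nonneg a)

theorem neg_mul_abs_le_mul_mul_of_abs_le_one {a x l m : ℝ} (hl : 0 ≤ l) (hm : l ≤ m)
    (hx : |x| ≤ 1) : -(m * |a|) ≤ l * x * a :=
  calc -(m * |a|) ≤ -|l * x * a| := by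
        rw [abs_mul, abs_mul, abs_of_nonneg hl, neg_le_neg_iff]
        gcongr
        exact (mul_le_of_le_one_right hl hx).trans hm
    _ ≤ l * x * a := neg_abs_le _

/-- Lemma F.1: ℓ₁ cone property for approximate solutions. -/
theorem l1_cone_property {d : ℕ} (L : (Fin d → ℝ) → ℝ)
    (hdiff : Differentiable ℝ L) (hconv : ConvexOn ℝ Set.univ L)
    (l : Fin d → ℝ) (hl : ∀ j, 0 ≤ l j)
    (s : Finset (Fin d))
    (βstar βtil ξ : Fin d → ℝ)
    (hsupp : ∀ j ∉ s, βstar j = 0)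
    (hξ1 : ∀ j, |ξ j| ≤ 1)
    (hξ2 : ∀ j, βtil j ≠ 0 → ξ j = Real.sign (βtil j))
    (ε : ℝ)
    (hstat : ∀ j, |fderiv ℝ L βtil (Pi.single j 1) + l j * ξ j| ≤ ε)
    (hmin : (⨆ j, |fderiv ℝ L βstar (Pi.single j 1)|) + ε
        < ⨅ j : {j : Fin d // j ∉ s}, l (j : Fin d)) :
    ∑ j ∈ sᶜ, |βtil j - βstar j|
      ≤ ((⨆ j, l j) + (⨆ j, |fderiv ℝ L βstar (Pi.single j 1)|) + ε)
          / ((⨅ j : {j : Fin d // j ∉ s}, l (j : Fin d))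
              - (⨆ j, |fderiv ℝ L βstar (Pi.single j 1)|) - ε)
        * ∑ j ∈ s, |βtil j - βstar j| := by
  have htotal := sum_mul_le_of_approx_stationary (fun j => βtil j - βstar j) _ _
    (fun j => l j * ξ j) (hconv.sum_mul_fderiv_single_le (hdiff βstar) (hdiff βtil)) hstat
    (le_ciSup (Finite.bddAbove_range fun j => |fderiv ℝ L βstar (Pi.single j 1)|))
  rw [add_assoc, sub_sub]
  refine sum_compl_abs_le_div_mul_sum_abs s _ _ (by linarith) htotal (fun j hj => ?_)
    fun j _ => neg_mul_abs_le_mul_mul_of_abs_le_one (hl j) (le_ciSup (Finite.bddAbove_range l) j)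
      (hξ1 j)
  rw [hsupp j hj, sub_zero]
  exact mul_abs_le_mul_mul_of_eq_sign
    (ciInf_le (Finite.bddBelow_range fun j : {j // j ∉ s} => l j) ⟨j, hj⟩) (hξ2 j)
end

section
/- Let u ∈ ℝ^d, E an index set, m ≥ 1, and γ ≥ 0 with ‖u_{E^c}‖₁ ≤ γ‖u_E‖₁ and |E| ≤ k. Let J be the indices of the m largest-magnitude entries of u in E^c, and I = E ∪ J. Then ‖u_{I^c}‖₂ ≤ γ·sqrt(k/m)·‖u_I‖₂, and consequently ‖u‖₂ ≤ (1 + γ·sqrt(k/m))·‖u_I‖₂. -/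
/-- Block-decomposition estimate used in the proof of Lemma E.2. -/
theorem block_decomposition_estimate {d : ℕ} (u : Fin d → ℝ)
    (E J : Finset (Fin d)) (k m : ℕ) (γ : ℝ)
    (hm : 0 < m) (hγ : 0 ≤ γ) (hk : E.card ≤ k)
    (hcone : ∑ j ∈ Eᶜ, |u j| ≤ γ * ∑ j ∈ E, |u j|)
    (hJE : J ⊆ Eᶜ) (hJcard : J.card = m)
    (hdom : ∀ j ∈ J, ∀ i ∈ Eᶜ, i ∉ J → |u i| ≤ |u j|) :
    Real.sqrt (∑ j ∈ (E ∪ J)ᶜ, (u j)^2)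
        ≤ γ * Real.sqrt ((k : ℝ) / m) * Real.sqrt (∑ j ∈ E ∪ J, (u j)^2) ∧
    Real.sqrt (∑ j, (u j)^2)
        ≤ (1 + γ * Real.sqrt ((k : ℝ) / m)) * Real.sqrt (∑ j ∈ E ∪ J, (u j)^2) := by
  set A := ∑ j ∈ E, |u j| with hA
  set B := ∑ j ∈ Eᶜ, |u j| with hB
  have hA0 : 0 ≤ A := Finset.sum_nonneg fun _ _ => abs_nonneg _
  have hB0 : 0 ≤ B := Finset.sum_nonneg fun _ _ => abs_nonneg _
  have hm0 : (0:ℝ) < m := by exact_mod_cast hm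
  have hJB : ∑ j ∈ J, |u j| ≤ B :=
    Finset.sum_le_sum_of_subset_of_nonneg hJE fun _ _ _ => abs_nonneg _
  -- each entry outside I is small
  have hsmall : ∀ i ∈ (E ∪ J)ᶜ, (m:ℝ) * |u i| ≤ B := by
    intro i hi
    simp only [Finset.mem_compl, Finset.mem_union, not_or] at hi
    have hiE : i ∈ Eᶜ := Finset.mem_compl.2 hi.1
    have : (m:ℝ) * |u i| = ∑ j ∈ J, |u i| := by
      rw [Finset.sum_const, hJcard, nsmul_eq_mul]
    rw [this]
    exact (Finset.sum_le_sum fun j hj => hdom j hj i hiE hi.2).trans hJB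
  have hsub : (E ∪ J)ᶜ ⊆ Eᶜ := Finset.compl_subset_compl.2 Finset.subset_union_left
  have hIcB : ∑ j ∈ (E ∪ J)ᶜ, |u j| ≤ B :=
    Finset.sum_le_sum_of_subset_of_nonneg hsub fun _ _ _ => abs_nonneg _
  have hmain : ∑ j ∈ (E ∪ J)ᶜ, (u j)^2 ≤ (B / m) * B := by
    calc ∑ j ∈ (E ∪ J)ᶜ, (u j)^2 ≤ ∑ j ∈ (E ∪ J)ᶜ, (B / m) * |u j| := by
          refine Finset.sum_le_sum fun i hi => ?_
          have h1 : (u i)^2 = |u i| * |u i| := by rw [sq]; exact (abs_mul_abs_self _).symm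
          rw [h1]
          have h2 : |u i| ≤ B / m := by
            rw [le_div_iff₀ hm0]; linarith [hsmall i hi]
          exact mul_le_mul_of_nonneg_right h2 (abs_nonneg _)
      _ = (B / m) * ∑ j ∈ (E ∪ J)ᶜ, |u j| := by rw [Finset.mul_sum]
      _ ≤ (B / m) * B :=
          mul_le_mul_of_nonneg_left hIcB (div_nonneg hB0 hm0.le)
  have hCS : A^2 ≤ (k:ℝ) * ∑ j ∈ E, (u j)^2 := by
    have := sq_sum_le_card_mul_sum_sq (s := E) (f := fun j => |u j|)
    simp only [sq_abs] at this
    refine this.trans ?_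
    have : (E.card : ℝ) ≤ k := by exact_mod_cast hk
    exact mul_le_mul_of_nonneg_right this
      (Finset.sum_nonneg fun _ _ => sq_nonneg _)
  have hEI : ∑ j ∈ E, (u j)^2 ≤ ∑ j ∈ E ∪ J, (u j)^2 :=
    Finset.sum_le_sum_of_subset_of_nonneg Finset.subset_union_left
      fun _ _ _ => sq_nonneg _
  set S := ∑ j ∈ E ∪ J, (u j)^2 with hS
  have hS0 : 0 ≤ S := Finset.sum_nonneg fun _ _ => sq_nonneg _
  set C := γ * Real.sqrt ((k:ℝ)/m) with hC
  have hC0 : 0 ≤ C := mul_nonneg hγ (Real.sqrt_nonneg _)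
  have hbound : ∑ j ∈ (E ∪ J)ᶜ, (u j)^2 ≤ C^2 * S := by
    have hBγA : B ≤ γ * A := hcone
    have h1 : (B / m) * B ≤ γ^2 * A^2 / m := by
      have : B * B ≤ (γ * A) * (γ * A) := mul_le_mul hBγA hBγA hB0 (mul_nonneg hγ hA0)
      rw [div_mul_eq_mul_div, div_le_div_iff₀ hm0 hm0]
      nlinarith
    have h2 : γ^2 * A^2 / m ≤ γ^2 * ((k:ℝ) * S) / m := by
      gcongr
      exact hCS.trans (mul_le_mul_of_nonneg_left hEI (Nat.cast_nonneg _))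
    have hCsq : C^2 = γ^2 * ((k:ℝ)/m) := by
      rw [hC, mul_pow, Real.sq_sqrt (by positivity)]
    calc ∑ j ∈ (E ∪ J)ᶜ, (u j)^2 ≤ (B/m)*B := hmain
      _ ≤ γ^2 * A^2 / m := h1
      _ ≤ γ^2 * ((k:ℝ) * S) / m := h2
      _ = C^2 * S := by rw [hCsq]; ring
  have first : Real.sqrt (∑ j ∈ (E ∪ J)ᶜ, (u j)^2) ≤ C * Real.sqrt S := by
    calc Real.sqrt (∑ j ∈ (E ∪ J)ᶜ, (u j)^2) ≤ Real.sqrt (C^2 * S) :=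
          Real.sqrt_le_sqrt hbound
      _ = C * Real.sqrt S := by
          rw [Real.sqrt_mul (sq_nonneg _), Real.sqrt_sq hC0]
  refine ⟨first, ?_⟩
  have hsplit : ∑ j, (u j)^2 = S + ∑ j ∈ (E ∪ J)ᶜ, (u j)^2 := by
    rw [hS, Finset.sum_add_sum_compl]
  have hsqrt_add : Real.sqrt (∑ j, (u j)^2) ≤ Real.sqrt S + Real.sqrt (∑ j ∈ (E ∪ J)ᶜ, (u j)^2) := by
    rw [hsplit]
    set T := ∑ j ∈ (E ∪ J)ᶜ, (u j)^2 with hT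
    have hT0 : 0 ≤ T := Finset.sum_nonneg fun _ _ => sq_nonneg _
    have h1 : S + T ≤ (Real.sqrt S + Real.sqrt T)^2 := by
      have := Real.sq_sqrt hS0
      have := Real.sq_sqrt hT0
      nlinarith [Real.sqrt_nonneg S, Real.sqrt_nonneg T]
    calc Real.sqrt (S + T) ≤ Real.sqrt ((Real.sqrt S + Real.sqrt T)^2) :=
          Real.sqrt_le_sqrt h1
      _ = Real.sqrt S + Real.sqrt T :=
          Real.sqrt_sq (by positivity)
  calc Real.sqrt (∑ j, (u j)^2)
      ≤ Real.sqrt S + Real.sqrt (∑ j ∈ (E ∪ J)ᶜ, (u j)^2) := hsqrt_add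
    _ ≤ Real.sqrt S + C * Real.sqrt S := by linarith [first]
    _ = (1 + C) * Real.sqrt S := by ring
end
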